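/- Let 0 < C ≤ 1 and let j_i : Y → X_i (i ∈ I) be a family of nonexpansive, C-expansive maps between complete extended metric spaces, with gluing pseudodistance D on the disjoint union ⊔_i X_i. Then for every i ∈ I and all x,x' ∈ X_i one has D(ι_i x, ι_i x') ≥ C · d_{X_i}(x,x'); in particular each canonical map ι_i : X_i → ⊔_Y X_i into the glued space is C-expansive (and injective). -/

import Mathlib

/-!
Project a gluing chain from `x` to `x'` into `X i`: every intermediate point `j k y` is replaced
by `j i y`, the endpoints stay. The result is a chain in `X i` from `x` to `x'` whose links are
at most `1 / C` times the original ones: a link between `j k y` and `j k y'` with `k ≠ i` is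
compared through `d(y, y')` (`j i` is nonexpansive, `j k` is `C`-expansive), and a link inside
`X i` is unchanged. The triangle inequality in `X i` gives `C · d(x, x') ≤ D(ι_i x, ι_i x')`.
-/

open ENNReal NNReal

/-- The gluing pseudodistance on the disjoint union `Σ i, X i` associated to a family of maps
`j i : Y → X i`: the infimum of `∑ s, d (p s) (q s)` over all finite chains
`p 0 = a, q 0, p 1, q 1, …, p n, q n = b` in which each pair `p s, q s` lies in a single
summand `X (idx s)` and consecutive points `q s`, `p (s+1)` are images of a common point of
`Y` under the corresponding `j`. -/
noncomputable def glueDist {I Y : Type*} {X : I → Type*} [∀ i, EMetricSpace (X i)]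
    (j : ∀ i, Y → X i) (a b : Σ i, X i) : ℝ≥0∞ :=
  sInf {L : ℝ≥0∞ | ∃ (n : ℕ) (idx : Fin (n + 1) → I) (p q : ∀ s, X (idx s)),
    (⟨idx 0, p 0⟩ : Σ i, X i) = a ∧ (⟨idx (Fin.last n), q (Fin.last n)⟩ : Σ i, X i) = b ∧
    (∀ s : Fin n, ∃ y : Y,
      q s.castSucc = j (idx s.castSucc) y ∧ p s.succ = j (idx s.succ) y) ∧
    L = ∑ s, edist (p s) (q s)}

theorem edist_le_sum_edist_of_chain {α : Type*} [PseudoEMetricSpace α] :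
    ∀ {n : ℕ} (u v : Fin (n + 1) → α), (∀ t : Fin n, v t.castSucc = u t.succ) →
      edist (u 0) (v (Fin.last n)) ≤ ∑ s, edist (u s) (v s)
  | 0, u, v, _ => by simp
  | n + 1, u, v, hlink => by
    have hprefix := edist_le_sum_edist_of_chain (u ∘ Fin.castSucc) (v ∘ Fin.castSucc)
      fun t => hlink t.castSucc
    rw [Fin.sum_univ_castSucc]
    calc edist (u 0) (v (Fin.last (n + 1)))
        ≤ edist (u 0) (v (Fin.last n).castSucc) + edist (u (Fin.last (n + 1)))
            (v (Fin.last (n + 1))) := by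
          rw [hlink (Fin.last n)]
          exact edist_triangle _ _ _
      _ ≤ _ := by gcongr; exact hprefix

section Gluing

variable {I Y : Type*} {X : I → Type*} {j : ∀ i, Y → X i} {C : ℝ≥0}

/-- `x` is the point of `X i` that replaces `z` when a gluing chain is projected to `X i`. -/
def GlueShadow (j : ∀ i, Y → X i) (i : I) (z : Σ k, X k) (x : X i) : Prop :=
  z = ⟨i, x⟩ ∨ ∃ y, z.2 = j z.1 y ∧ x = j i y

theorem GlueShadow.eq_of_same_summand {i : I} {a x : X i}
    (h : GlueShadow j i ⟨i, a⟩ x) : x = a := by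
  rcases h with h | ⟨y, ha, hx⟩
  · exact (eq_of_heq (Sigma.mk.inj_iff.mp h).2).symm
  · exact hx.trans ha.symm

theorem mul_edist_le_of_glueShadow [PseudoEMetricSpace Y] [∀ i, PseudoEMetricSpace (X i)]
    (hC1 : C ≤ 1) {i : I} (hne : LipschitzWith 1 (j i))
    (hexp : ∀ (k : I) (y y' : Y), (C : ℝ≥0∞) * edist y y' ≤ edist (j k y) (j k y'))
    {k : I} {a b : X k} {a' b' : X i}
    (ha : GlueShadow j i ⟨k, a⟩ a') (hb : GlueShadow j i ⟨k, b⟩ b') :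
    (C : ℝ≥0∞) * edist a' b' ≤ edist a b := by
  by_cases hki : k = i
  · subst hki
    rw [ha.eq_of_same_summand, hb.eq_of_same_summand]
    exact mul_le_of_le_one_left zero_le (mod_cast hC1)
  · have not_self {c : X k} {c' : X i} (h : (⟨k, c⟩ : Σ k, X k) = ⟨i, c'⟩) : False :=
      hki (Sigma.mk.inj_iff.mp h).1
    obtain ⟨y, (rfl : a = j k y), rfl⟩ := ha.resolve_left not_self
    obtain ⟨y', (rfl : b = j k y'), rfl⟩ := hb.resolve_left not_self
    calc (C : ℝ≥0∞) * edist (j i y) (j i y') ≤ C * edist y y' := by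
          gcongr; simpa using hne.edist_le_mul y y'
      _ ≤ edist (j k y) (j k y') := hexp k y y'

theorem mul_edist_le_glueDist [PseudoEMetricSpace Y] [∀ i, EMetricSpace (X i)] (hC1 : C ≤ 1)
    (hne : ∀ i, LipschitzWith 1 (j i))
    (hexp : ∀ (k : I) (y y' : Y), (C : ℝ≥0∞) * edist y y' ≤ edist (j k y) (j k y'))
    (i : I) (x x' : X i) :
    (C : ℝ≥0∞) * edist x x' ≤ glueDist j ⟨i, x⟩ ⟨i, x'⟩ := by
  refine le_sInf ?_
  rintro L ⟨n, idx, p, q, hstart, hend, hlinks, rfl⟩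
  choose y hq hp using hlinks
  let u : Fin (n + 1) → X i := Fin.cons x fun t => j i (y t)
  let v : Fin (n + 1) → X i := Fin.snoc (fun t => j i (y t)) x'
  have hu (s : Fin (n + 1)) : GlueShadow j i ⟨idx s, p s⟩ (u s) := by
    induction s using Fin.cases with
    | zero => exact Or.inl (by simpa [u] using hstart)
    | succ t => exact Or.inr ⟨y t, hp t, by simp [u]⟩
  have hv (s : Fin (n + 1)) : GlueShadow j i ⟨idx s, q s⟩ (v s) := by
    induction s using Fin.lastCases with
    | last => exact Or.inl (by simpa [v] using hend)
    | cast t => exact Or.inr ⟨y t, hq t, by simp [v]⟩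
  calc (C : ℝ≥0∞) * edist x x' = C * edist (u 0) (v (Fin.last n)) := by simp [u, v]
    _ ≤ C * ∑ s, edist (u s) (v s) := by
      gcongr
      exact edist_le_sum_edist_of_chain u v fun t => by simp [u, v]
    _ = ∑ s, C * edist (u s) (v s) := Finset.mul_sum _ _ _
    _ ≤ ∑ s, edist (p s) (q s) :=
      Finset.sum_le_sum fun s _ => mul_edist_le_of_glueShadow hC1 (hne i) hexp (hu s) (hv s)

end Gluing

theorem glue_canonical_maps_expansive {I Y : Type*} {X : I → Type*}
    [EMetricSpace Y]
    [∀ i, EMetricSpace (X i)]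
    (C : ℝ≥0) (hC0 : 0 < C) (hC1 : C ≤ 1)
    (j : ∀ i, Y → X i)
    (hne : ∀ i, LipschitzWith 1 (j i))
    (hexp : ∀ (i : I) (y y' : Y), (C : ℝ≥0∞) * edist y y' ≤ edist (j i y) (j i y')) :
    ∀ (i : I) (x x' : X i),
      (C : ℝ≥0∞) * edist x x' ≤ glueDist j ⟨i, x⟩ ⟨i, x'⟩ ∧
      (glueDist j ⟨i, x⟩ ⟨i, x'⟩ = 0 → x = x') := by
  intro i x x'
  have hbound := mul_edist_le_glueDist hC1 hne hexp i x x'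
  refine ⟨hbound, fun hzero => ?_⟩
  have hC : (C : ℝ≥0∞) ≠ 0 := mod_cast hC0.ne'
  rw [hzero, nonpos_iff_eq_zero, mul_eq_zero] at hbound
  exact edist_eq_zero.mp (hbound.resolve_left hC)
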